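/- Let X be a string and s > 0 a shift. If ED(X[0..|X|−s], X[s..|X|]) < 2s, then the 2s-block periodicity of X is at most 4s, i.e., X can be partitioned into at most 4s consecutive substrings, each of which is periodic with a period of length at most 2s. -/

import Mathlib

/-- The substring of `X` with indices in `{i, ..., j-1}` (out-of-bounds indices clipped). -/
def listSub {α : Type*} (X : List α) (i j : ℕ) : List α := (X.take j).drop i

/-- Substring with possibly negative (integer) endpoints, clipped. -/
def listSubZ {α : Type*} (X : List α) (i j : ℤ) : List α := listSub X i.toNat j.toNat

/-- The costs of the edit operations (formerly `Levenshtein.Cost` in Mathlib). -/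
structure Levenshtein.Cost (α β δ : Type*) where
  /-- Cost to delete an element from the source. -/
  delete : α → δ
  /-- Cost to insert an element into the destination. -/
  insert : β → δ
  /-- Cost to substitute one element for another. -/
  substitute : α → β → δ

/-- Unit costs (formerly `Levenshtein.defaultCost` in Mathlib). -/
def Levenshtein.defaultCost {α : Type*} [DecidableEq α] : Levenshtein.Cost α α ℕ where
  delete _ := 1
  insert _ := 1
  substitute a b := if a = b then 0 else 1

/-- Levenshtein distance with cost `C` (formerly `levenshtein` in Mathlib), given by its
defining recursion (the lemmas `levenshtein_nil_nil`, `levenshtein_nil_cons`,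
`levenshtein_cons_nil`, `levenshtein_cons_cons` of the former Mathlib). -/
def levenshtein {α β δ : Type*} [AddZeroClass δ] [Min δ] (C : Levenshtein.Cost α β δ) :
    List α → List β → δ
  | [], [] => 0
  | [], y :: ys => C.insert y + levenshtein C [] ys
  | x :: xs, [] => C.delete x + levenshtein C xs []
  | x :: xs, y :: ys =>
    min (C.delete x + levenshtein C xs (y :: ys))
      (min (C.insert y + levenshtein C (x :: xs) ys) (C.substitute x y + levenshtein C xs ys))

/-- Edit distance (Levenshtein distance) with unit costs. -/
def ED {α : Type*} [DecidableEq α] (X Y : List α) : ℕ :=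
  levenshtein Levenshtein.defaultCost X Y

/-- `X` is periodic with period `P`: `X` is a prefix of the infinite repetition of `P`. -/
def PeriodicWith {α : Type*} (X P : List α) : Prop :=
  P ≠ [] ∧ ∀ j, j < X.length → X[j]? = P[j % P.length]?

/-- `X` is `K`-periodic: periodic with some period of length at most `K`. -/
def IsPeriodic {α : Type*} (K : ℕ) (X : List α) : Prop :=
  ∃ P : List α, P.length ≤ K ∧ PeriodicWith X P

/-- `Y` can be partitioned into at most `L` consecutive `K`-periodic substrings. -/
def BPLe {α : Type*} (K L : ℕ) (Y : List α) : Prop :=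
  ∃ Ys : List (List α), Ys.flatten = Y ∧ Ys.length ≤ L ∧ ∀ Z ∈ Ys, IsPeriodic K Z

/-- The `K`-block periodicity of `Y`: the smallest `L` such that `Y` can be partitioned
into `L` consecutive `K`-periodic substrings. -/
noncomputable def bp {α : Type*} (K : ℕ) (Y : List α) : ℕ := sInf {L | BPLe K L Y}

/-! Walk along an optimal alignment of `X[0..|X|-s]` with `X[s..|X|]`. At a pair of positions
`i` (left) and `k` (right) the drift `|k - s - i|` is bounded both by the cost spent so far and,
through the lengths, by the cost still to come; as the two add up to less than `2s`, the drift
is less than `s`. A maximal run of matches starting at such a pair is a common prefix of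
`X[i..]` and `X[k..]` with `0 < k - i ≤ 2s`, hence has period `k - i`. Every edit closes at most
one run and leaves at most one further letter, so `X[0..|X|-s]` splits into at most
`2 ED + 1 < 4s` periodic blocks, and the last `s` letters form one more. -/

section EditDistance

variable {α : Type*} [DecidableEq α]

theorem ED_nil_cons (b : α) (B : List α) : ED [] (b :: B) = ED [] B + 1 := by
  rw [ED, levenshtein, add_comm]; rfl

theorem ED_cons_nil (a : α) (A : List α) : ED (a :: A) [] = ED A [] + 1 := by
  rw [ED, levenshtein, add_comm]; rfl

theorem ED_cons_cons (a b : α) (A B : List α) :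
    ED (a :: A) (b :: B) = min (ED A (b :: B) + 1)
      (min (ED (a :: A) B + 1) (ED A B + if a = b then 0 else 1)) := by
  rw [ED, levenshtein]
  simp only [Levenshtein.defaultCost, ED, add_comm]

theorem length_le_add_ED (A B : List α) :
    A.length ≤ B.length + ED A B ∧ B.length ≤ A.length + ED A B := by
  induction A generalizing B with
  | nil =>
    induction B with
    | nil => simp
    | cons b B ih => simp only [ED_nil_cons, List.length_cons] at ih ⊢; omega
  | cons a A ihA =>
    induction B with
    | nil => have := ihA []; simp only [ED_cons_nil, List.length_cons] at this ⊢; omega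
    | cons b B ihB =>
      have h₁ := ihA (b :: B)
      have h₂ := ihA B
      simp only [ED_cons_cons, List.length_cons] at h₁ h₂ ihB ⊢
      split_ifs <;> omega

theorem ED_cons_cases (a : α) (A B : List α) :
    ED (a :: A) B = ED A B + 1 ∨ ∃ b B', B = b :: B' ∧
      (ED (a :: A) B = ED (a :: A) B' + 1 ∨ ED (a :: A) B = ED A B' + 1 ∨
        (a = b ∧ ED (a :: A) B = ED A B')) := by
  cases B with
  | nil => exact Or.inl (ED_cons_nil a A)
  | cons b B =>
    by_cases hdel : ED (a :: A) (b :: B) = ED A (b :: B) + 1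
    · exact Or.inl hdel
    refine Or.inr ⟨b, B, rfl, ?_⟩
    have h := ED_cons_cons a b A B
    split_ifs at h with hab
    · subst hab; simp only [true_and]; omega
    · simp only [hab, false_and, or_false]; omega

end EditDistance

section BlockPeriodicity

variable {α : Type*} {K : ℕ}

theorem BPLe.nil (n : ℕ) : BPLe K n ([] : List α) :=
  ⟨[], rfl, Nat.zero_le n, by simp⟩

theorem BPLe.mono {m n : ℕ} {Y : List α} (h : BPLe K m Y) (hmn : m ≤ n) : BPLe K n Y :=
  let ⟨Ys, hflat, hlen, hper⟩ := h
  ⟨Ys, hflat, hlen.trans hmn, hper⟩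

theorem BPLe.append {m n : ℕ} {Y Z : List α} (hY : BPLe K m Y) (hZ : BPLe K n Z) :
    BPLe K (m + n) (Y ++ Z) := by
  obtain ⟨Ys, rfl, hYlen, hYper⟩ := hY
  obtain ⟨Zs, rfl, hZlen, hZper⟩ := hZ
  refine ⟨Ys ++ Zs, List.flatten_append, by simp only [List.length_append]; omega, ?_⟩
  simp only [List.mem_append]
  rintro W (hW | hW)
  exacts [hYper W hW, hZper W hW]

theorem bpLe_one_of_isPeriodic {Z : List α} (h : IsPeriodic K Z) : BPLe K 1 Z :=
  ⟨[Z], List.flatten_singleton, le_rfl, by simpa using h⟩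

theorem isPeriodic_of_hasPeriod {Z : List α} {p : ℕ} (hZ : Z ≠ []) (hp : 0 < p) (hpK : p ≤ K)
    (hper : Z.HasPeriod p) : IsPeriodic K Z := by
  have hq : 0 < (Z.take p).length := by
    simpa [List.length_pos_iff] using ⟨hp, hZ⟩
  have hper' : Z.HasPeriod (Z.take p).length := by
    rcases le_total p Z.length with h | h
    · rwa [List.length_take_of_le h]
    · exact List.hasPeriod_of_length_le Z _ (by simp [h])
  refine ⟨Z.take p, (List.length_take_le p Z).trans hpK, List.length_pos_iff.mp hq, ?_⟩
  intro j hj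
  rw [List.hasPeriod_iff_forall_getElem?_mod.mp hper' j hj,
    List.getElem?_take_of_lt ((Nat.mod_lt j hq).trans_le (List.length_take_le p Z))]

theorem bpLe_one_of_hasPeriod {Z : List α} {p : ℕ} (hp : 0 < p) (hpK : p ≤ K)
    (hper : Z.HasPeriod p) : BPLe K 1 Z := by
  rcases eq_or_ne Z [] with rfl | hZ
  · exact BPLe.nil 1
  · exact bpLe_one_of_isPeriodic (isPeriodic_of_hasPeriod hZ hp hpK hper)

theorem bpLe_one_of_length_le {Z : List α} (hZ : Z.length ≤ K) : BPLe K 1 Z := by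
  rcases eq_or_ne Z [] with rfl | hZ'
  · exact BPLe.nil 1
  · exact bpLe_one_of_isPeriodic ⟨Z, hZ, hZ', fun j hj => by rw [Nat.mod_eq_of_lt hj]⟩

theorem hasPeriod_of_isPrefix_of_isPrefix_drop {L Z : List α} {p : ℕ} (h₀ : L <+: Z)
    (hp : L <+: Z.drop p) : L.HasPeriod p := by
  rw [List.hasPeriod_iff_getElem?]
  intro k hk
  have e₀ := List.prefix_iff_getElem?.mp h₀ (k + p) (by omega)
  have e₁ := List.prefix_iff_getElem?.mp hp k (by omega)
  rw [List.getElem?_drop, add_comm] at e₁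
  rw [List.getElem?_eq_getElem (by omega), List.getElem?_eq_getElem (by omega), ← Option.some_inj,
    ← e₀, ← e₁]

theorem bpLe_append_of_isPrefix_drop {n i q : ℕ} {Y L R : List α} (hiq : i < q)
    (hqK : q ≤ i + K) (h₀ : L <+: Y.drop i) (h₁ : L <+: Y.drop q) (hR : BPLe K n R) :
    BPLe K (1 + n) (L ++ R) := by
  refine BPLe.append (bpLe_one_of_hasPeriod (p := q - i) (by omega) (by omega) ?_) hR
  refine hasPeriod_of_isPrefix_of_isPrefix_drop h₀ ?_
  rwa [List.drop_drop, Nat.add_sub_cancel' hiq.le]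

end BlockPeriodicity

section ListSub

variable {α : Type*} (X : List α)

theorem length_listSub (i j : ℕ) : (listSub X i j).length = min j X.length - i := by
  simp [listSub]

theorem listSub_eq_cons {i j : ℕ} (hij : i < j) (hj : j ≤ X.length) :
    listSub X i j = X[i] :: listSub X (i + 1) j := by
  rw [listSub, List.drop_eq_getElem_cons (by simp; omega), List.getElem_take]; rfl

theorem eq_getElem_of_listSub_eq_cons {i j : ℕ} {b : α} {B : List α} (hj : j ≤ X.length)
    (h : listSub X i j = b :: B) : ∃ hij : i < j, b = X[i] ∧ B = listSub X (i + 1) j := by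
  have hij : i < j := by
    have hlen := congrArg List.length h
    simp only [length_listSub, List.length_cons] at hlen
    omega
  rw [listSub_eq_cons X hij hj, List.cons.injEq] at h
  exact ⟨hij, h.1.symm, h.2.symm⟩

end ListSub

section SelfAlignment

variable {α : Type*} [DecidableEq α] (X : List α) (s : ℕ)

theorem lt_and_le_add_of_dist_add_ED_lt {i k : ℕ} (hi : i + s ≤ X.length) (hk : k ≤ X.length)
    (hcost : Nat.dist (i + s) k + ED (listSub X i (X.length - s)) (listSub X k X.length) < 2 * s) :
    i < k ∧ k ≤ i + 2 * s := by
  have hlen := length_le_add_ED (listSub X i (X.length - s)) (listSub X k X.length)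
  simp only [length_listSub, min_self, min_eq_left (Nat.sub_le X.length s)] at hlen
  rw [Nat.dist] at hcost
  omega

theorem bpLe_of_exists_run {i k : ℕ} (hi : i + s ≤ X.length) (hk : k ≤ X.length)
    (hcost : Nat.dist (i + s) k + ED (listSub X i (X.length - s)) (listSub X k X.length) < 2 * s)
    (hrun : ∃ L R, listSub X i (X.length - s) = L ++ R ∧ L <+: X.drop i ∧ L <+: X.drop k ∧
      BPLe (2 * s) (2 * ED (listSub X i (X.length - s)) (listSub X k X.length)) R) :
    BPLe (2 * s) (2 * ED (listSub X i (X.length - s)) (listSub X k X.length) + 1)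
      (listSub X i (X.length - s)) := by
  obtain ⟨L, R, hLR, h₀, h₁, hR⟩ := hrun
  obtain ⟨hlo, hhi⟩ := lt_and_le_add_of_dist_add_ED_lt X s hi hk hcost
  have hblocks := bpLe_append_of_isPrefix_drop hlo hhi h₀ h₁ hR
  rwa [← hLR, add_comm] at hblocks

/- The state of the walk: positions `i` and `k`, and the run `L` of matches in progress, left
open so that further matches can extend it. The drift `dist (i + s) k` is a lower bound for the
cost already spent, and does not grow faster than the remaining cost decreases. -/
theorem exists_run_append_bpLe (i k : ℕ) (hi : i + s ≤ X.length) (hk : k ≤ X.length)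
    (hcost : Nat.dist (i + s) k + ED (listSub X i (X.length - s)) (listSub X k X.length) < 2 * s) :
    ∃ L R, listSub X i (X.length - s) = L ++ R ∧ L <+: X.drop i ∧ L <+: X.drop k ∧
      BPLe (2 * s) (2 * ED (listSub X i (X.length - s)) (listSub X k X.length)) R := by
  rcases hi.lt_or_eq with hi | hi
  swap
  · refine ⟨[], [], ?_, List.nil_prefix, List.nil_prefix, BPLe.nil _⟩
    simp [listSub]
    omega
  have hA := listSub_eq_cons X (i := i) (j := X.length - s) (by omega) (Nat.sub_le _ _)
  have hhead : BPLe (2 * s) 1 [X[i]] := bpLe_one_of_length_le (by simp; omega)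
  rw [hA] at hcost ⊢
  rw [Nat.dist] at hcost
  rcases ED_cons_cases X[i] (listSub X (i + 1) (X.length - s)) (listSub X k X.length) with
    hdel | ⟨b, B, hB, hins | hsub | ⟨hab, hmatch⟩⟩
  · rw [hdel] at hcost ⊢
    have hR := bpLe_of_exists_run X s (i := i + 1) (k := k) (by omega) hk
      (by rw [Nat.dist]; omega)
      (exists_run_append_bpLe (i + 1) k (by omega) hk (by rw [Nat.dist]; omega))
    exact ⟨[], X[i] :: _, rfl, List.nil_prefix, List.nil_prefix,
      (hhead.append hR).mono (by omega)⟩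
  all_goals obtain ⟨hk', rfl, rfl⟩ := eq_getElem_of_listSub_eq_cons X le_rfl hB
  · rw [hins] at hcost ⊢
    have hR := bpLe_of_exists_run X s (i := i) (k := k + 1) hi.le hk'
      (by rw [Nat.dist, hA]; omega)
      (exists_run_append_bpLe i (k + 1) hi.le hk' (by rw [Nat.dist, hA]; omega))
    rw [hA] at hR
    exact ⟨[], _, rfl, List.nil_prefix, List.nil_prefix, hR.mono (by omega)⟩
  · rw [hsub] at hcost ⊢
    have hR := bpLe_of_exists_run X s (i := i + 1) (k := k + 1) (by omega) hk'
      (by rw [Nat.dist]; omega)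
      (exists_run_append_bpLe (i + 1) (k + 1) (by omega) hk' (by rw [Nat.dist]; omega))
    exact ⟨[], X[i] :: _, rfl, List.nil_prefix, List.nil_prefix,
      (hhead.append hR).mono (by omega)⟩
  · rw [hmatch] at hcost ⊢
    obtain ⟨L, R, hLR, h₀, h₁, hR⟩ :=
      exists_run_append_bpLe (i + 1) (k + 1) (by omega) hk' (by rw [Nat.dist]; omega)
    refine ⟨X[i] :: L, R, by rw [hLR]; rfl, ?_, ?_, hR⟩
    · rw [List.drop_eq_getElem_cons (by omega)]
      exact List.cons_prefix_cons.mpr ⟨rfl, h₀⟩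
    · rw [List.drop_eq_getElem_cons hk']
      exact List.cons_prefix_cons.mpr ⟨hab, h₁⟩
termination_by X.length - s - i + (X.length - k)

end SelfAlignment

theorem self_alignment_implies_small_block_periodicity_general {α : Type*} [DecidableEq α]
    (X : List α) (s : ℕ)
    (h : ED (listSub X 0 (X.length - s)) (listSub X s X.length) < 2 * s) :
    BPLe (2 * s) (4 * s) X := by
  rcases lt_or_ge X.length s with hX | hX
  · exact (bpLe_one_of_length_le (by omega)).mono (by omega)
  have hcost : Nat.dist (0 + s) s + ED (listSub X 0 (X.length - s)) (listSub X s X.length)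
      < 2 * s := by
    simpa using h
  have hhead := bpLe_of_exists_run X s (by omega) hX hcost
    (exists_run_append_bpLe X s 0 s (by omega) hX hcost)
  have htail : BPLe (2 * s) 1 (X.drop (X.length - s)) := bpLe_one_of_length_le (by simp; omega)
  rw [← List.take_append_drop (X.length - s) X]
  exact (hhead.append htail).mono (by omega)

/-- Self-alignment implies small block periodicity: if
`ED(X[0..|X|-s], X[s..|X|]) < 2s` then `bp_{2s}(X) ≤ 4s`, i.e. `X` can be partitioned
into at most `4s` consecutive substrings, each periodic with a period of length at most `2s`. -/
theorem self_alignment_implies_small_block_periodicity {α : Type*} [DecidableEq α]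
    (X : List α) (s : ℕ) (hs : 0 < s)
    (h : ED (listSub X 0 (X.length - s)) (listSub X s X.length) < 2 * s) :
    BPLe (2 * s) (4 * s) X :=
  self_alignment_implies_small_block_periodicity_general X s h
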